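/- arXiv:1708.04127 — 6 statements merged into one kernel-verified Lean document; each statement's English description precedes it below -/
import Mathlib

section
/- Let π : U → ℝ be dual feasible for the restricted master problem RLPM associated with a nonempty subset L' ⊆ L of loads (i.e., π_j ≥ 0 for all j ∈ U and ∑_{j∈S} π_j ≤ 1 for every S ∈ L'). Let D = max_{S∈L} ∑_{j∈S} π_j be the maximum over ALL loads, so that the minimum reduced cost of the pricing subproblem is v(PSP) = 1 − D, and assume D > 0. Then every feasible solution x of the master LP (LPM) satisfies ∑_{S∈L} x_S ≥ (∑_{j∈U} π_j) / D; in particular, the optimal value satisfies v(LPM) ≥ (∑_{j∈U} π_j)/(1 − v(PSP)), which for an optimal dual solution π of RLPM reads v(LPM) ≥ v(RLPM)/(1 − v(PSP)). -/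
open Finset

/-!
Weak duality for the covering LP: since every load lies in `U` and carries `π`-weight at most `D`,
`π / D` is dual feasible for LPM, so `∑_j π_j / D` bounds every feasible `x` from below. Concretely,
`∑_j π_j ≤ ∑_j π_j ∑_{S ∋ j} x_S = ∑_S x_S ∑_{j ∈ S} π_j ≤ D ∑_S x_S`.
-/

section CoveringDuality

variable {ι : Type*} [DecidableEq ι] {U : Finset ι} {L : Finset (Finset ι)} {π : ι → ℝ} {x : Finset ι → ℝ}

theorem sum_mul_sum_filter_mem_eq (hLU : ∀ S ∈ L, S ⊆ U) :
    ∑ j ∈ U, π j * ∑ S ∈ L.filter (j ∈ ·), x S = ∑ S ∈ L, x S * ∑ j ∈ S, π j := by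
  simp_rw [mul_sum]
  rw [sum_comm' (t' := L) (s' := id)]
  · simp_rw [id, mul_comm]
  · intro j S
    simp only [mem_filter, id]
    exact ⟨fun ⟨_, hS, hj⟩ => ⟨hj, hS⟩, fun ⟨hj, hS⟩ => ⟨hLU S hS hj, hS, hj⟩⟩

theorem sum_le_sum_mul_sum_of_cover (hLU : ∀ S ∈ L, S ⊆ U)
    (hπ : ∀ j ∈ U, 0 ≤ π j) (hx : ∀ j ∈ U, 1 ≤ ∑ S ∈ L.filter (j ∈ ·), x S) :
    ∑ j ∈ U, π j ≤ ∑ S ∈ L, x S * ∑ j ∈ S, π j := by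
  rw [← sum_mul_sum_filter_mem_eq hLU]
  exact sum_le_sum fun j hj => le_mul_of_one_le_right (hπ j hj) (hx j hj)

theorem sum_div_le_sum_of_cover {D : ℝ} (hD : 0 < D) (hLU : ∀ S ∈ L, S ⊆ U)
    (hπ : ∀ j ∈ U, 0 ≤ π j) (hπD : ∀ S ∈ L, ∑ j ∈ S, π j ≤ D) (hx : ∀ S ∈ L, 0 ≤ x S)
    (hcover : ∀ j ∈ U, 1 ≤ ∑ S ∈ L.filter (j ∈ ·), x S) :
    (∑ j ∈ U, π j) / D ≤ ∑ S ∈ L, x S := by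
  rw [div_le_iff₀ hD]
  calc ∑ j ∈ U, π j ≤ ∑ S ∈ L, x S * ∑ j ∈ S, π j := sum_le_sum_mul_sum_of_cover hLU hπ hcover
    _ ≤ ∑ S ∈ L, x S * D := sum_le_sum fun S hS => mul_le_mul_of_nonneg_left (hπD S hS) (hx S hS)
    _ = (∑ S ∈ L, x S) * D := (sum_mul ..).symm

end CoveringDuality

theorem lpm_dual_ratio_bound_general {ι : Type*} [DecidableEq ι]
    (U : Finset ι)
    (t : ι → ℕ) (c : ℕ)
    -- `L` is the set of all loads
    (L : Finset (Finset ι))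
    (hL : L = U.powerset.filter fun S => ∑ j ∈ S, t j ≤ c)
    -- `π` is dual feasible for the RLPM
    (π : ι → ℝ)
    (hπnonneg : ∀ j ∈ U, 0 ≤ π j)
    -- `D = max_{S ∈ L} ∑_{j ∈ S} π_j`, and `D > 0`
    (D : ℝ)
    (hDub : ∀ S ∈ L, ∑ j ∈ S, π j ≤ D)
    (hDpos : 0 < D)
    -- `x` is any feasible solution of the LPM
    (x : Finset ι → ℝ)
    (hxnonneg : ∀ S ∈ L, 0 ≤ x S)
    (hxcover : ∀ j ∈ U, 1 ≤ ∑ S ∈ L.filter (fun S => j ∈ S), x S) :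
    (∑ j ∈ U, π j) / D ≤ ∑ S ∈ L, x S := by
  have hLU : ∀ S ∈ L, S ⊆ U := fun S hS => by
    subst hL
    exact mem_powerset.mp (mem_filter.mp hS).1
  exact sum_div_le_sum_of_cover hDpos hLU hπnonneg hDub hxnonneg hxcover

/-- If `π` is dual feasible for the restricted master problem RLPM
(associated with a nonempty `L' ⊆ L`), `D = max_{S ∈ L} ∑_{j∈S} π_j > 0` (so the
minimum reduced cost of the pricing subproblem is `v(PSP) = 1 - D`), then every
feasible solution `x` of the master LP (LPM) satisfies
`∑_{S∈L} x_S ≥ (∑_{j∈U} π_j) / D`. -/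
theorem lpm_dual_ratio_bound {ι : Type*} [DecidableEq ι]
    (U : Finset ι) (hUne : U.Nonempty)
    (t : ι → ℕ) (c : ℕ) (hc : 0 < c)
    (ht : ∀ j ∈ U, 0 < t j) (htc : ∀ j ∈ U, t j ≤ c)
    -- `L` is the set of all loads
    (L : Finset (Finset ι))
    (hL : L = U.powerset.filter fun S => ∑ j ∈ S, t j ≤ c)
    -- `L'` is a nonempty subset of loads (columns of the RLPM)
    (L' : Finset (Finset ι)) (hL'sub : L' ⊆ L) (hL'ne : L'.Nonempty)
    -- `π` is dual feasible for the RLPM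
    (π : ι → ℝ)
    (hπnonneg : ∀ j ∈ U, 0 ≤ π j)
    (hπdual : ∀ S ∈ L', ∑ j ∈ S, π j ≤ 1)
    -- `D = max_{S ∈ L} ∑_{j ∈ S} π_j`, and `D > 0`
    (D : ℝ)
    (hDub : ∀ S ∈ L, ∑ j ∈ S, π j ≤ D)
    (hDmem : ∃ S ∈ L, ∑ j ∈ S, π j = D)
    (hDpos : 0 < D)
    -- `x` is any feasible solution of the LPM
    (x : Finset ι → ℝ)
    (hxnonneg : ∀ S ∈ L, 0 ≤ x S)
    (hxcover : ∀ j ∈ U, 1 ≤ ∑ S ∈ L.filter (fun S => j ∈ S), x S) :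
    (∑ j ∈ U, π j) / D ≤ ∑ S ∈ L, x S :=
  lpm_dual_ratio_bound_general U t c L hL π hπnonneg D hDub hDpos x hxnonneg hxcover
end

section
/- Let π : U → ℝ be dual feasible for RLPM (π_j ≥ 0 for all j ∈ U and ∑_{j∈S} π_j ≤ 1 for every S ∈ L'), let D = max_{S∈L} ∑_{j∈S} π_j > 0 (so the minimum reduced cost is v(PSP) = 1 − D), and suppose x' : L' → ℝ is feasible for RLPM with ∑_{S∈L'} x'_S = ∑_{j∈U} π_j (so π and x' are a primal–dual optimal pair of RLPM with common value v(RLPM) = ∑_{j∈U} π_j). If ⌈∑_{j∈U} π_j⌉ = ⌈(∑_{j∈U} π_j)/D⌉, then ⌈v(LPM)⌉ = ⌈∑_{j∈U} π_j⌉; i.e., if ⌈v(RLPM)⌉ = ⌈v(RLPM)/(1 − v(PSP))⌉, column generation may terminate with ⌈v(RLPM)⌉ as the obtained lower bound on the optimal number of stations. -/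
/-!
Extending the restricted primal solution `x'` by zero gives a feasible solution of the full
master problem, so `v(LPM) ≤ ∑ π`. Conversely `π / D` is dual feasible for the full master
problem, so weak duality gives `∑ π / D ≤ v(LPM)`. Both bounds have the same ceiling.
-/

open Finset

namespace Finset

variable {ι : Type*} [DecidableEq ι]

/-- `x` is feasible for the master problem restricted to the columns `L`. -/
def IsFractionalCover (U : Finset ι) (L : Finset (Finset ι)) (x : Finset ι → ℝ) : Prop :=
  (∀ S ∈ L, 0 ≤ x S) ∧ ∀ j ∈ U, 1 ≤ ∑ S ∈ L.filter (fun S => j ∈ S), x S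

theorem sum_mul_sum_eq_sum_mul_sum_filter {R : Type*} [CommSemiring R] {U : Finset ι}
    {L : Finset (Finset ι)} (hsub : ∀ S ∈ L, S ⊆ U) (x : Finset ι → R) (π : ι → R) :
    ∑ S ∈ L, x S * ∑ j ∈ S, π j = ∑ j ∈ U, π j * ∑ S ∈ L.filter (fun S => j ∈ S), x S := by
  simp_rw [mul_sum]
  rw [sum_comm' (t' := U) (s' := fun j => L.filter (fun S => j ∈ S))]
  · exact sum_congr rfl fun j _ => sum_congr rfl fun S _ => mul_comm _ _
  · intro S j
    constructor
    · rintro ⟨hS, hj⟩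
      exact ⟨mem_filter.2 ⟨hS, hj⟩, hsub S hS hj⟩
    · rintro ⟨hS, -⟩
      exact mem_filter.1 hS

theorem sum_ite_mem_filter_of_subset {α M : Type*} [DecidableEq α] [AddCommMonoid M]
    {L L' : Finset α} (h : L' ⊆ L) (p : α → Prop) [DecidablePred p] (x : α → M) :
    ∑ S ∈ L.filter p, (if S ∈ L' then x S else 0) = ∑ S ∈ L'.filter p, x S := by
  rw [sum_ite_mem, filter_inter, inter_eq_right.2 h]

namespace IsFractionalCover

variable {U : Finset ι} {L : Finset (Finset ι)} {x : Finset ι → ℝ}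

theorem extend {L' : Finset (Finset ι)} (h : L' ⊆ L) (hx : IsFractionalCover U L' x) :
    IsFractionalCover U L (fun S => if S ∈ L' then x S else 0) := by
  refine ⟨fun S _ => ?_, fun j hj => ?_⟩
  · dsimp only
    split_ifs with hS
    exacts [hx.1 S hS, le_rfl]
  · rw [sum_ite_mem_filter_of_subset h]
    exact hx.2 j hj

theorem sum_le_mul_sum (hx : IsFractionalCover U L x) (hsub : ∀ S ∈ L, S ⊆ U)
    {π : ι → ℝ} (hπ : ∀ j ∈ U, 0 ≤ π j) {D : ℝ} (hD : ∀ S ∈ L, ∑ j ∈ S, π j ≤ D) :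
    ∑ j ∈ U, π j ≤ D * ∑ S ∈ L, x S :=
  calc ∑ j ∈ U, π j
      ≤ ∑ j ∈ U, π j * ∑ S ∈ L.filter (fun S => j ∈ S), x S :=
        sum_le_sum fun j hj => le_mul_of_one_le_right (hπ j hj) (hx.2 j hj)
    _ = ∑ S ∈ L, x S * ∑ j ∈ S, π j := (sum_mul_sum_eq_sum_mul_sum_filter hsub x π).symm
    _ ≤ ∑ S ∈ L, x S * D :=
        sum_le_sum fun S hS => mul_le_mul_of_nonneg_left (hD S hS) (hx.1 S hS)
    _ = D * ∑ S ∈ L, x S := by rw [← sum_mul, mul_comm]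

end IsFractionalCover

end Finset

theorem column_generation_termination_general {ι : Type*} [DecidableEq ι]
    (U : Finset ι)
    (t : ι → ℕ) (c : ℕ)
    -- `L` is the set of all loads
    (L : Finset (Finset ι))
    (hL : L = U.powerset.filter fun S => ∑ j ∈ S, t j ≤ c)
    -- `L'` is a nonempty subset of loads (columns of the RLPM)
    (L' : Finset (Finset ι)) (hL'sub : L' ⊆ L)
    -- `π` is dual feasible for the RLPM
    (π : ι → ℝ)
    (hπnonneg : ∀ j ∈ U, 0 ≤ π j)
    -- `D = max_{S ∈ L} ∑_{j ∈ S} π_j`, and `D > 0`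
    (D : ℝ)
    (hDub : ∀ S ∈ L, ∑ j ∈ S, π j ≤ D)
    (hDpos : 0 < D)
    -- `x'` is primal feasible for the RLPM with value `∑_{j∈U} π_j`
    (x' : Finset ι → ℝ)
    (hx'nonneg : ∀ S ∈ L', 0 ≤ x' S)
    (hx'cover : ∀ j ∈ U, 1 ≤ ∑ S ∈ L'.filter (fun S => j ∈ S), x' S)
    (hx'val : ∑ S ∈ L', x' S = ∑ j ∈ U, π j)
    -- `vLPM` is the optimal value of the master LP
    (vLPM : ℝ)
    (hvLPM : IsLeast {v : ℝ | ∃ x : Finset ι → ℝ,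
        (∀ S ∈ L, 0 ≤ x S) ∧
        (∀ j ∈ U, 1 ≤ ∑ S ∈ L.filter (fun S => j ∈ S), x S) ∧
        v = ∑ S ∈ L, x S} vLPM)
    -- the ceiling termination criterion
    (hceil : ⌈∑ j ∈ U, π j⌉ = ⌈(∑ j ∈ U, π j) / D⌉) :
    ⌈vLPM⌉ = ⌈∑ j ∈ U, π j⌉ := by
  have hsub : ∀ S ∈ L, S ⊆ U := fun S hS => by
    subst hL
    exact mem_powerset.1 (mem_filter.1 hS).1
  have hub : vLPM ≤ ∑ j ∈ U, π j := by
    obtain ⟨hnonneg, hcover⟩ :=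
      IsFractionalCover.extend hL'sub (U := U) ⟨hx'nonneg, hx'cover⟩
    refine hvLPM.2 ⟨_, hnonneg, hcover, ?_⟩
    rw [sum_ite_mem, inter_eq_right.2 hL'sub, hx'val]
  have hlb : (∑ j ∈ U, π j) / D ≤ vLPM := by
    obtain ⟨x, hnonneg, hcover, rfl⟩ := hvLPM.1
    rw [div_le_iff₀' hDpos]
    exact IsFractionalCover.sum_le_mul_sum ⟨hnonneg, hcover⟩ hsub hπnonneg hDub
  exact le_antisymm (Int.ceil_mono hub) (hceil ▸ Int.ceil_mono hlb)

/-- If `π` is dual feasible for RLPM, `D = max_{S∈L} ∑_{j∈S} π_j > 0`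
(so `v(PSP) = 1 - D`), and `x'` is primal feasible for RLPM with objective value
`∑_{S∈L'} x'_S = ∑_{j∈U} π_j` (a primal–dual optimal pair, with common value
`v(RLPM) = ∑_{j∈U} π_j`), and if `⌈∑_{j∈U} π_j⌉ = ⌈(∑_{j∈U} π_j)/D⌉`
(i.e. `⌈v(RLPM)⌉ = ⌈v(RLPM)/(1 - v(PSP))⌉`), then `⌈v(LPM)⌉ = ⌈∑_{j∈U} π_j⌉`:
column generation may terminate with `⌈v(RLPM)⌉` as the obtained lower bound. -/
theorem column_generation_termination {ι : Type*} [DecidableEq ι]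
    (U : Finset ι) (hUne : U.Nonempty)
    (t : ι → ℕ) (c : ℕ) (hc : 0 < c)
    (ht : ∀ j ∈ U, 0 < t j) (htc : ∀ j ∈ U, t j ≤ c)
    -- `L` is the set of all loads
    (L : Finset (Finset ι))
    (hL : L = U.powerset.filter fun S => ∑ j ∈ S, t j ≤ c)
    -- `L'` is a nonempty subset of loads (columns of the RLPM)
    (L' : Finset (Finset ι)) (hL'sub : L' ⊆ L) (hL'ne : L'.Nonempty)
    -- `π` is dual feasible for the RLPM
    (π : ι → ℝ)
    (hπnonneg : ∀ j ∈ U, 0 ≤ π j)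
    (hπdual : ∀ S ∈ L', ∑ j ∈ S, π j ≤ 1)
    -- `D = max_{S ∈ L} ∑_{j ∈ S} π_j`, and `D > 0`
    (D : ℝ)
    (hDub : ∀ S ∈ L, ∑ j ∈ S, π j ≤ D)
    (hDmem : ∃ S ∈ L, ∑ j ∈ S, π j = D)
    (hDpos : 0 < D)
    -- `x'` is primal feasible for the RLPM with value `∑_{j∈U} π_j`
    (x' : Finset ι → ℝ)
    (hx'nonneg : ∀ S ∈ L', 0 ≤ x' S)
    (hx'cover : ∀ j ∈ U, 1 ≤ ∑ S ∈ L'.filter (fun S => j ∈ S), x' S)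
    (hx'val : ∑ S ∈ L', x' S = ∑ j ∈ U, π j)
    -- `vLPM` is the optimal value of the master LP
    (vLPM : ℝ)
    (hvLPM : IsLeast {v : ℝ | ∃ x : Finset ι → ℝ,
        (∀ S ∈ L, 0 ≤ x S) ∧
        (∀ j ∈ U, 1 ≤ ∑ S ∈ L.filter (fun S => j ∈ S), x S) ∧
        v = ∑ S ∈ L, x S} vLPM)
    -- the ceiling termination criterion
    (hceil : ⌈∑ j ∈ U, π j⌉ = ⌈(∑ j ∈ U, π j) / D⌉) :
    ⌈vLPM⌉ = ⌈∑ j ∈ U, π j⌉ :=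
  column_generation_termination_general U t c L hL L' hL'sub π hπnonneg D hDub hDpos x' hx'nonneg
    hx'cover hx'val vLPM hvLPM hceil
end

section
/- (Validity of the lower bound LB₂.) If S₁, …, S_m is a partition of the task set T into loads (pairwise disjoint, union T, and ∑_{j∈S_k} t_j ≤ c for every k), then m ≥ |{ j ∈ T : 2·t_j > c }| + ⌈ |{ j ∈ T : 2·t_j = c }| / 2 ⌉. -/
/-!
Give each task of more than half the cycle time weight 2 and each task of exactly half the
cycle time weight 1. A load has total weight at most 2: two heavy tasks, or a heavy and a half
task, already exceed `c`, and three half tasks take `3c/2 > c`. Since every task lies in some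
load, the total weight is at most `2m`, and halving it gives the bound because `m` is an integer.
-/

open Finset

theorem card_filter_le_sum_card_filter {ι κ : Type*} [Fintype κ] (T : Finset ι)
    (S : κ → Finset ι) (hcover : ∀ j ∈ T, ∃ k, j ∈ S k) (p : ι → Prop) [DecidablePred p] :
    #(T.filter p) ≤ ∑ k, #((S k).filter p) := by
  classical
  calc #(T.filter p) ≤ #((univ.biUnion S).filter p) := by
        refine card_le_card (filter_subset_filter p fun j hj => ?_)
        simpa using hcover j hj
    _ ≤ ∑ k, #((S k).filter p) := by
        rw [filter_biUnion]
        exact card_biUnion_le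

theorem two_mul_card_half_lt_add_card_half_eq_le_two {ι : Type*} (s : Finset ι) (t : ι → ℕ)
    {c : ℕ} (hc : 0 < c) (hload : ∑ j ∈ s, t j ≤ c) :
    2 * #(s.filter fun j => c < 2 * t j) + #(s.filter fun j => 2 * t j = c) ≤ 2 := by
  classical
  set A := s.filter fun j => c < 2 * t j
  set B := s.filter fun j => 2 * t j = c
  have hA : #A * (c + 1) ≤ ∑ j ∈ A, 2 * t j := by
    simpa only [smul_eq_mul] using
      card_nsmul_le_sum A (fun j => 2 * t j) (c + 1) fun j hj => (mem_filter.mp hj).2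
  have hB : #B * c ≤ ∑ j ∈ B, 2 * t j := by
    simpa only [smul_eq_mul] using card_nsmul_le_sum B _ _ fun j hj => (mem_filter.mp hj).2.ge
  have hAB : ∑ j ∈ A, 2 * t j + ∑ j ∈ B, 2 * t j ≤ 2 * c := by
    rw [← sum_union (disjoint_filter.mpr fun j _ hj => by omega), ← mul_sum]
    gcongr
    exact (sum_le_sum_of_subset (union_subset (filter_subset _ _) (filter_subset _ _))).trans
      hload
  have hweight : (#A + #B) * c + #A ≤ 2 * c := by linarith
  rcases Nat.eq_zero_or_pos #A with hA0 | hA_pos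
  · have hB_le : #B ≤ 2 :=
      Nat.le_of_mul_le_mul_right (by simpa [hA0] using hweight : #B * c ≤ 2 * c) hc
    omega
  · have hAB_lt : #A + #B < 2 :=
      Nat.lt_of_mul_lt_mul_right (by omega : (#A + #B) * c < 2 * c)
    omega

theorem add_ceil_half_le {a b m : ℕ} (h : 2 * a + b ≤ 2 * m) :
    (a : ℤ) + ⌈(b : ℝ) / 2⌉ ≤ m := by
  have hceil : ⌈(b : ℝ) / 2⌉ ≤ (m : ℤ) - a := by
    rw [Int.ceil_le, div_le_iff₀ two_pos]
    push_cast
    have : (2 * a + b : ℝ) ≤ 2 * m := by exact_mod_cast h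
    linarith
  linarith

theorem lb2_valid_general {ι : Type*}
    (T : Finset ι) (t : ι → ℕ) (c : ℕ) (hc : 0 < c)
    (m : ℕ) (S : Fin m → Finset ι)
    (hcover : ∀ j ∈ T, ∃ k : Fin m, j ∈ S k)
    (hload : ∀ k : Fin m, ∑ j ∈ S k, t j ≤ c) :
    ((T.filter fun j => c < 2 * t j).card : ℤ)
      + ⌈((T.filter fun j => 2 * t j = c).card : ℝ) / 2⌉ ≤ (m : ℤ) := by
  apply add_ceil_half_le
  calc 2 * #(T.filter fun j => c < 2 * t j) + #(T.filter fun j => 2 * t j = c)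
      ≤ ∑ k, (2 * #((S k).filter fun j => c < 2 * t j)
          + #((S k).filter fun j => 2 * t j = c)) := by
        rw [sum_add_distrib, ← mul_sum]
        gcongr <;> exact card_filter_le_sum_card_filter T S hcover _
    _ ≤ ∑ _k : Fin m, 2 :=
        sum_le_sum fun k _ => two_mul_card_half_lt_add_card_half_eq_le_two (S k) t hc (hload k)
    _ = 2 * m := by simp [mul_comm]

/-- Validity of the lower bound LB₂: if `S₁, …, S_m` is a partition
of the task set `T` into loads, then
`m ≥ |{j ∈ T : 2·t_j > c}| + ⌈|{j ∈ T : 2·t_j = c}| / 2⌉`. -/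
theorem lb2_valid {ι : Type*} [DecidableEq ι]
    (T : Finset ι) (t : ι → ℕ) (c : ℕ) (hc : 0 < c)
    (ht : ∀ j ∈ T, 0 < t j) (htc : ∀ j ∈ T, t j ≤ c)
    (m : ℕ) (S : Fin m → Finset ι)
    (hdisj : ∀ k l : Fin m, k ≠ l → Disjoint (S k) (S l))
    (hsub : ∀ k : Fin m, S k ⊆ T)
    (hcover : ∀ j ∈ T, ∃ k : Fin m, j ∈ S k)
    (hload : ∀ k : Fin m, ∑ j ∈ S k, t j ≤ c) :
    ((T.filter fun j => c < 2 * t j).card : ℤ)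
      + ⌈((T.filter fun j => 2 * t j = c).card : ℝ) / 2⌉ ≤ (m : ℤ) :=
  lb2_valid_general T t c hc m S hcover hload
end

section
/- (Key step for LB₃: unit weight capacity of a load.) Define weights w_j for j ∈ T by: w_j = 1 if 3·t_j > 2c; w_j = 2/3 if 3·t_j = 2c; w_j = 1/2 if c < 3·t_j < 2c; w_j = 1/3 if 3·t_j = c; and w_j = 0 if 3·t_j < c. Then for every load S ⊆ T (i.e., every S with ∑_{j∈S} t_j ≤ c) one has ∑_{j∈S} w_j ≤ 1. -/
/-!
Scale the weights by 6 and measure a task of size `x` by the number of marks `c/3`, `2c/3`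
it reaches (`thirds`) and by whether it lies strictly between two marks (`excess`); then
`c * thirds + excess ≤ 3x`, so a load has at most three thirds in total, and exactly three only
when no task has excess. Pointwise `6w ≤ 3 * thirds` and `6w ≤ 2 * thirds + 6 * excess`, which
bounds the scaled weight of the load by 6 in either case.
-/

open Finset

namespace LoadWeight

variable (c x : ℕ)

def sixWeight : ℕ :=
  if 2 * c < 3 * x then 6
  else if 3 * x = 2 * c then 4
  else if c < 3 * x then 3
  else if 3 * x = c then 2
  else 0

def thirds : ℕ :=
  (if c ≤ 3 * x then 1 else 0) + (if 2 * c ≤ 3 * x then 1 else 0)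

def excess : ℕ :=
  if c < 3 * x ∧ 3 * x ≠ 2 * c then 1 else 0

lemma mul_thirds_add_excess_le : c * thirds c x + excess c x ≤ 3 * x := by
  unfold thirds excess
  split_ifs <;> omega

lemma sixWeight_le_three_mul_thirds : sixWeight c x ≤ 3 * thirds c x := by
  unfold sixWeight thirds
  split_ifs <;> omega

lemma sixWeight_le_two_mul_thirds_add_six_mul_excess :
    sixWeight c x ≤ 2 * thirds c x + 6 * excess c x := by
  unfold sixWeight thirds excess
  split_ifs <;> omega

lemma sum_sixWeight_le_six {ι : Type*} {c : ℕ} (hc : 0 < c) (S : Finset ι) (t : ι → ℕ)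
    (hload : ∑ j ∈ S, t j ≤ c) : ∑ j ∈ S, sixWeight c (t j) ≤ 6 := by
  set θ := ∑ j ∈ S, thirds c (t j)
  set ε := ∑ j ∈ S, excess c (t j)
  have hθε : c * θ + ε ≤ 3 * c :=
    calc c * θ + ε = ∑ j ∈ S, (c * thirds c (t j) + excess c (t j)) := by
          rw [sum_add_distrib, mul_sum]
      _ ≤ ∑ j ∈ S, 3 * t j := sum_le_sum fun j _ => mul_thirds_add_excess_le c (t j)
      _ ≤ 3 * c := by rw [← mul_sum]; omega
  have hθ : θ ≤ 3 := le_of_mul_le_mul_left (by linarith) hc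
  rcases hθ.lt_or_eq with hθ | hθ
  · calc ∑ j ∈ S, sixWeight c (t j) ≤ ∑ j ∈ S, 3 * thirds c (t j) :=
          sum_le_sum fun j _ => sixWeight_le_three_mul_thirds c (t j)
      _ = 3 * θ := (mul_sum ..).symm
      _ ≤ 6 := by omega
  · have hε : ε = 0 := by rw [hθ] at hθε; omega
    calc ∑ j ∈ S, sixWeight c (t j)
        ≤ ∑ j ∈ S, (2 * thirds c (t j) + 6 * excess c (t j)) :=
          sum_le_sum fun j _ => sixWeight_le_two_mul_thirds_add_six_mul_excess c (t j)
      _ = 2 * θ + 6 * ε := by rw [sum_add_distrib, mul_sum, mul_sum]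
      _ = 6 := by omega

end LoadWeight

open LoadWeight in
theorem lb3_load_weight_capacity_general {ι : Type*}
    (T : Finset ι) (t : ι → ℕ) (c : ℕ) (hc : 0 < c)
    (w : ι → ℝ)
    (hw1 : ∀ j ∈ T, 2 * c < 3 * t j → w j = 1)
    (hw2 : ∀ j ∈ T, 3 * t j = 2 * c → w j = 2 / 3)
    (hw3 : ∀ j ∈ T, c < 3 * t j → 3 * t j < 2 * c → w j = 1 / 2)
    (hw4 : ∀ j ∈ T, 3 * t j = c → w j = 1 / 3)
    (hw5 : ∀ j ∈ T, 3 * t j < c → w j = 0)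
    (S : Finset ι) (hS : S ⊆ T) (hload : ∑ j ∈ S, t j ≤ c) :
    ∑ j ∈ S, w j ≤ 1 := by
  have hw : ∀ j ∈ S, w j = (sixWeight c (t j) : ℝ) / 6 := by
    intro j hj
    have hjT := hS hj
    unfold sixWeight
    split_ifs with h₁ h₂ h₃ h₄
    · rw [hw1 j hjT h₁]; norm_num
    · rw [hw2 j hjT h₂]; norm_num
    · rw [hw3 j hjT h₃ (by omega)]; norm_num
    · rw [hw4 j hjT h₄]; norm_num
    · rw [hw5 j hjT (by omega)]; norm_num
  have hsix : (∑ j ∈ S, sixWeight c (t j) : ℝ) ≤ 6 := by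
    exact_mod_cast sum_sixWeight_le_six hc S t hload
  rw [sum_congr rfl hw, ← sum_div]
  linarith

/-- Key step for LB₃: unit weight capacity of a load: with weights
`w_j = 1` if `3t_j > 2c`, `w_j = 2/3` if `3t_j = 2c`, `w_j = 1/2` if
`c < 3t_j < 2c`, `w_j = 1/3` if `3t_j = c` and `w_j = 0` if `3t_j < c`,
every load `S ⊆ T` (i.e. `∑_{j∈S} t_j ≤ c`) satisfies `∑_{j∈S} w_j ≤ 1`. -/
theorem lb3_load_weight_capacity {ι : Type*} [DecidableEq ι]
    (T : Finset ι) (t : ι → ℕ) (c : ℕ) (hc : 0 < c)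
    (ht : ∀ j ∈ T, 0 < t j) (htc : ∀ j ∈ T, t j ≤ c)
    (w : ι → ℝ)
    (hw1 : ∀ j ∈ T, 2 * c < 3 * t j → w j = 1)
    (hw2 : ∀ j ∈ T, 3 * t j = 2 * c → w j = 2 / 3)
    (hw3 : ∀ j ∈ T, c < 3 * t j → 3 * t j < 2 * c → w j = 1 / 2)
    (hw4 : ∀ j ∈ T, 3 * t j = c → w j = 1 / 3)
    (hw5 : ∀ j ∈ T, 3 * t j < c → w j = 0)
    (S : Finset ι) (hS : S ⊆ T) (hload : ∑ j ∈ S, t j ≤ c) :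
    ∑ j ∈ S, w j ≤ 1 :=
  lb3_load_weight_capacity_general T t c hc w hw1 hw2 hw3 hw4 hw5 S hS hload
end

section
/- (Validity of the lower bound LB₃.) Define weights w_j for j ∈ T by: w_j = 1 if 3·t_j > 2c; w_j = 2/3 if 3·t_j = 2c; w_j = 1/2 if c < 3·t_j < 2c; w_j = 1/3 if 3·t_j = c; and w_j = 0 if 3·t_j < c. If S₁, …, S_m is a partition of T into loads (pairwise disjoint, union T, and ∑_{j∈S_k} t_j ≤ c for every k), then m ≥ ⌈ ∑_{j∈T} w_j ⌉. -/
open Finset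

/-! The weight of a task is `W (t_j)` for the step function `W = lb3Weight c`, and `W` is
superadditive on loads: `W a + W b ≤ W (a + b)` whenever `a + b ≤ c`. Hence the weights of the
tasks of a load add up to at most `W (c) = 1`, and summing over the `m` stations bounds the total
weight by `m`. -/

noncomputable def lb3Weight (c x : ℕ) : ℝ :=
  if 2 * c < 3 * x then 1
  else if 3 * x = 2 * c then 2 / 3
  else if c < 3 * x then 1 / 2
  else if 3 * x = c then 1 / 3
  else 0

lemma lb3Weight_nonneg (c x : ℕ) : 0 ≤ lb3Weight c x := by
  unfold lb3Weight
  split_ifs <;> norm_num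

lemma lb3Weight_le_one (c x : ℕ) : lb3Weight c x ≤ 1 := by
  unfold lb3Weight
  split_ifs <;> norm_num

lemma lb3Weight_add_le {c : ℕ} (hc : 0 < c) {a b : ℕ} (hab : a + b ≤ c) :
    lb3Weight c a + lb3Weight c b ≤ lb3Weight c (a + b) := by
  unfold lb3Weight
  split_ifs <;> first | omega | norm_num

lemma sum_lb3Weight_le {ι : Type*} {c : ℕ} (hc : 0 < c) (t : ι → ℕ) (s : Finset ι)
    (hs : ∑ j ∈ s, t j ≤ c) :
    ∑ j ∈ s, lb3Weight c (t j) ≤ lb3Weight c (∑ j ∈ s, t j) := by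
  classical
  induction s using Finset.induction_on with
  | empty => simpa using lb3Weight_nonneg c 0
  | insert a s ha ih =>
    rw [sum_insert ha] at hs ⊢
    rw [sum_insert ha]
    calc lb3Weight c (t a) + ∑ j ∈ s, lb3Weight c (t j)
        ≤ lb3Weight c (t a) + lb3Weight c (∑ j ∈ s, t j) := by gcongr; exact ih (by omega)
      _ ≤ lb3Weight c (t a + ∑ j ∈ s, t j) := lb3Weight_add_le hc hs

theorem lb3_valid_general {ι : Type*}
    (T : Finset ι) (t : ι → ℕ) (c : ℕ) (hc : 0 < c)
    (w : ι → ℝ)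
    (hw1 : ∀ j ∈ T, 2 * c < 3 * t j → w j = 1)
    (hw2 : ∀ j ∈ T, 3 * t j = 2 * c → w j = 2 / 3)
    (hw3 : ∀ j ∈ T, c < 3 * t j → 3 * t j < 2 * c → w j = 1 / 2)
    (hw4 : ∀ j ∈ T, 3 * t j = c → w j = 1 / 3)
    (hw5 : ∀ j ∈ T, 3 * t j < c → w j = 0)
    (m : ℕ) (S : Fin m → Finset ι)
    (hdisj : ∀ k l : Fin m, k ≠ l → Disjoint (S k) (S l))
    (hsub : ∀ k : Fin m, S k ⊆ T)
    (hcover : ∀ j ∈ T, ∃ k : Fin m, j ∈ S k)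
    (hload : ∀ k : Fin m, ∑ j ∈ S k, t j ≤ c) :
    ⌈∑ j ∈ T, w j⌉ ≤ (m : ℤ) := by
  have hw : ∀ j ∈ T, w j = lb3Weight c (t j) := by
    intro j hj
    unfold lb3Weight
    split_ifs with h₁ h₂ h₃ h₄
    exacts [hw1 j hj h₁, hw2 j hj h₂, hw3 j hj h₃ (by omega), hw4 j hj h₄, hw5 j hj (by omega)]
  have hpairwise : ((univ : Finset (Fin m)) : Set (Fin m)).PairwiseDisjoint S :=
    fun k _ l _ hkl => hdisj k l hkl
  have hT : T = univ.disjiUnion S hpairwise := by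
    ext j
    simpa using ⟨hcover j, fun ⟨k, hk⟩ => hsub k hk⟩
  have hstation (k : Fin m) : ∑ j ∈ S k, lb3Weight c (t j) ≤ 1 :=
    (sum_lb3Weight_le hc t (S k) (hload k)).trans (lb3Weight_le_one c _)
  rw [Int.ceil_le, sum_congr rfl hw, hT, sum_disjiUnion]
  calc ∑ k, ∑ j ∈ S k, lb3Weight c (t j) ≤ ∑ _k : Fin m, (1 : ℝ) := sum_le_sum fun k _ => hstation k
    _ = ((m : ℤ) : ℝ) := by simp

/-- Validity of the lower bound LB₃: with weights
`w_j = 1` if `3t_j > 2c`, `w_j = 2/3` if `3t_j = 2c`, `w_j = 1/2` if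
`c < 3t_j < 2c`, `w_j = 1/3` if `3t_j = c` and `w_j = 0` if `3t_j < c`,
if `S₁, …, S_m` is a partition of `T` into loads, then `m ≥ ⌈∑_{j∈T} w_j⌉`. -/
theorem lb3_valid {ι : Type*} [DecidableEq ι]
    (T : Finset ι) (t : ι → ℕ) (c : ℕ) (hc : 0 < c)
    (ht : ∀ j ∈ T, 0 < t j) (htc : ∀ j ∈ T, t j ≤ c)
    (w : ι → ℝ)
    (hw1 : ∀ j ∈ T, 2 * c < 3 * t j → w j = 1)
    (hw2 : ∀ j ∈ T, 3 * t j = 2 * c → w j = 2 / 3)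
    (hw3 : ∀ j ∈ T, c < 3 * t j → 3 * t j < 2 * c → w j = 1 / 2)
    (hw4 : ∀ j ∈ T, 3 * t j = c → w j = 1 / 3)
    (hw5 : ∀ j ∈ T, 3 * t j < c → w j = 0)
    (m : ℕ) (S : Fin m → Finset ι)
    (hdisj : ∀ k l : Fin m, k ≠ l → Disjoint (S k) (S l))
    (hsub : ∀ k : Fin m, S k ⊆ T)
    (hcover : ∀ j ∈ T, ∃ k : Fin m, j ∈ S k)
    (hload : ∀ k : Fin m, ∑ j ∈ S k, t j ≤ c) :
    ⌈∑ j ∈ T, w j⌉ ≤ (m : ℤ) :=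
  lb3_valid_general T t c hc w hw1 hw2 hw3 hw4 hw5 m S hdisj hsub hcover hload
end

section
/- (Validity of the memory-based dominance rule.) Extendability of a partial U-line solution depends only on its set of assigned tasks: let N = (S₁, …, S_m; σ) and M = (S'₁, …, S'_{m'}; σ') be feasible partial U-line solutions with the same assigned task set A = S₁∪…∪S_m = S'₁∪…∪S'_{m'}. If N can be extended to a feasible U-line balance of all of T using r additional stations (i.e., a full feasible balance with stations S₁, …, S_m, S_{m+1}, …, S_{m+r} whose ordering extends σ), then M can be extended to a feasible U-line balance of T with m' + r stations. In particular, if m' ≤ m, every complete solution obtainable from node N has at least as many stations as some complete solution obtainable from node M, so node N may be pruned. -/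
/-!
Whether a task is forward or backward available at its position depends only on the set of
tasks placed before it, not on their order or their grouping into stations. So the stations
`C` completing `N` remain feasible after `M`, which has assigned exactly the same tasks.
-/

open Finset

/-- A feasible partial U-line solution on the task set `T`: a list `B` of
pairwise-disjoint nonempty station loads (its assigned tasks are those of
`B.flatten`, a subset of `T`), each observing the cycle time, such that every
assigned task is, at its position in the ordering `σ = B.flatten`, forward
available (all its predecessors in `T` occur earlier) or backward available
(all its successors in `T` occur earlier). -/
def IsUPartial {ι : Type*} (T : Finset ι) (t : ι → ℕ) (c : ℕ)
    (prec : ι → ι → Prop) (B : List (List ι)) : Prop :=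
  B.flatten.Nodup ∧
  (∀ j, j ∈ B.flatten → j ∈ T) ∧
  (∀ b ∈ B, b ≠ [] ∧ (b.map t).sum ≤ c) ∧
  ∀ i (h : i < B.flatten.length),
    (∀ k ∈ T, prec k (B.flatten.get ⟨i, h⟩) → k ∈ B.flatten.take i) ∨
    (∀ k ∈ T, prec (B.flatten.get ⟨i, h⟩) k → k ∈ B.flatten.take i)

/-- A feasible U-line balance of `T`: a feasible partial U-line solution whose
assigned task set is all of `T`. -/
def IsUBalance {ι : Type*} (T : Finset ι) (t : ι → ℕ) (c : ℕ)
    (prec : ι → ι → Prop) (B : List (List ι)) : Prop :=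
  IsUPartial T t c prec B ∧ ∀ j ∈ T, j ∈ B.flatten

section UAvailability

variable {ι : Type*} (T : Finset ι) (prec : ι → ι → Prop)

def UAvailable (p : List ι) (x : ι) : Prop :=
  (∀ k ∈ T, prec k x → k ∈ p) ∨ (∀ k ∈ T, prec x k → k ∈ p)

def UOrdered (σ : List ι) : Prop :=
  ∀ i (h : i < σ.length), UAvailable T prec (σ.take i) σ[i]

variable {T prec}

theorem UAvailable.mono {p q : List ι} {x : ι} (hpq : p ⊆ q) (hx : UAvailable T prec p x) :
    UAvailable T prec q x :=
  hx.imp (fun h k hk hkx => hpq (h k hk hkx)) (fun h k hk hxk => hpq (h k hk hxk))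

theorem uOrdered_append {σ τ : List ι} :
    UOrdered T prec (σ ++ τ) ↔
      UOrdered T prec σ ∧ ∀ k (h : k < τ.length), UAvailable T prec (σ ++ τ.take k) τ[k] := by
  constructor
  · intro hστ
    refine ⟨fun i hi => ?_, fun k hk => ?_⟩
    · have := hστ i (by rw [List.length_append]; omega)
      rwa [List.take_append_of_le_length hi.le, List.getElem_append_left hi] at this
    · have := hστ (σ.length + k) (by rw [List.length_append]; omega)
      rw [List.take_length_add_append, List.getElem_append_right (by omega)] at this
      simpa only [Nat.add_sub_cancel_left] using this
  · rintro ⟨hσ, hτ⟩ i hi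
    by_cases hiσ : i < σ.length
    · rw [List.take_append_of_le_length hiσ.le, List.getElem_append_left hiσ]
      exact hσ i hiσ
    · obtain ⟨k, rfl⟩ := Nat.exists_eq_add_of_le (not_lt.1 hiσ)
      rw [List.take_length_add_append, List.getElem_append_right (by omega)]
      simp only [Nat.add_sub_cancel_left]
      exact hτ k (by rw [List.length_append] at hi; omega)

theorem UOrdered.append_of_subset {σ σ' τ : List ι} (hσ' : UOrdered T prec σ')
    (hsub : σ ⊆ σ') (h : UOrdered T prec (σ ++ τ)) : UOrdered T prec (σ' ++ τ) :=
  uOrdered_append.2 ⟨hσ', fun k hk =>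
    ((uOrdered_append.1 h).2 k hk).mono (by grind)⟩

theorem isUPartial_iff {t : ι → ℕ} {c : ℕ} {B : List (List ι)} :
    IsUPartial T t c prec B ↔ B.flatten.Nodup ∧ (∀ j ∈ B.flatten, j ∈ T) ∧
      (∀ b ∈ B, b ≠ [] ∧ (b.map t).sum ≤ c) ∧ UOrdered T prec B.flatten :=
  Iff.rfl

variable {t : ι → ℕ} {c : ℕ} {N M C : List (List ι)}

theorem IsUPartial.append_of_flatten_mem_iff (hNC : IsUPartial T t c prec (N ++ C))
    (hM : IsUPartial T t c prec M) (hsame : ∀ j, j ∈ N.flatten ↔ j ∈ M.flatten) :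
    IsUPartial T t c prec (M ++ C) := by
  rw [isUPartial_iff] at hNC hM ⊢
  rw [List.flatten_append] at hNC ⊢
  obtain ⟨hNCnd, hNCT, hNCld, hNCord⟩ := hNC
  obtain ⟨hMnd, hMT, hMld, hMord⟩ := hM
  refine ⟨?_, ?_, ?_, hMord.append_of_subset (fun j hj => (hsame j).1 hj) hNCord⟩
  · rw [List.nodup_append] at hNCnd ⊢
    exact ⟨hMnd, hNCnd.2.1, fun a ha => hNCnd.2.2 a ((hsame a).2 ha)⟩
  · simp only [List.mem_append] at hNCT ⊢
    exact fun j hj => hj.elim (hMT j) (fun hjC => hNCT j (Or.inr hjC))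
  · simp only [List.mem_append] at hNCld ⊢
    exact fun b hb => hb.elim (hMld b) (fun hbC => hNCld b (Or.inr hbC))

theorem IsUBalance.append_of_flatten_mem_iff (hNC : IsUBalance T t c prec (N ++ C))
    (hM : IsUPartial T t c prec M) (hsame : ∀ j, j ∈ N.flatten ↔ j ∈ M.flatten) :
    IsUBalance T t c prec (M ++ C) := by
  refine ⟨IsUPartial.append_of_flatten_mem_iff hNC.1 hM hsame, fun j hj => ?_⟩
  have hj' := hNC.2 j hj
  simp only [List.flatten_append, List.mem_append] at hj' ⊢
  exact hj'.imp_left (hsame j).1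

end UAvailability

theorem memory_dominance_rule_general {ι : Type*}
    (T : Finset ι) (t : ι → ℕ) (c : ℕ)
    (prec : ι → ι → Prop)
    (N M : List (List ι))
    (hM : IsUPartial T t c prec M)
    -- `N` and `M` have the same set of assigned tasks
    (hsame : ∀ j, j ∈ N.flatten ↔ j ∈ M.flatten)
    -- `N` can be extended to a full feasible balance using `r` extra stations
    (r : ℕ) (C : List (List ι))
    (hC : IsUBalance T t c prec (N ++ C))
    (hr : C.length = r) :
    ∃ C' : List (List ι), C'.length = r ∧ IsUBalance T t c prec (M ++ C') :=
  ⟨C, hr, hC.append_of_flatten_mem_iff hM hsame⟩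

/-- Validity of the memory-based dominance rule: extendability of
a partial U-line solution depends only on its set of assigned tasks. If `N` and
`M` are feasible partial U-line solutions with the same assigned task set, and
`N` extends (by appending `r` further stations, with ordering extending that of
`N`) to a feasible U-line balance of all of `T`, then `M` also extends to a
feasible U-line balance of `T` using `r` additional stations, i.e. with
`M.length + r` stations in total. -/
theorem memory_dominance_rule {ι : Type*} [DecidableEq ι]
    (T : Finset ι) (t : ι → ℕ) (c : ℕ) (hc : 0 < c)
    (ht : ∀ j ∈ T, 0 < t j) (htc : ∀ j ∈ T, t j ≤ c)
    (prec : ι → ι → Prop)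
    (hacyc : ∀ j, ¬ Relation.TransGen prec j j)
    (N M : List (List ι))
    (hN : IsUPartial T t c prec N)
    (hM : IsUPartial T t c prec M)
    -- `N` and `M` have the same set of assigned tasks
    (hsame : ∀ j, j ∈ N.flatten ↔ j ∈ M.flatten)
    -- `N` can be extended to a full feasible balance using `r` extra stations
    (r : ℕ) (C : List (List ι))
    (hC : IsUBalance T t c prec (N ++ C))
    (hr : C.length = r) :
    ∃ C' : List (List ι), C'.length = r ∧ IsUBalance T t c prec (M ++ C') :=
  memory_dominance_rule_general T t c prec N M hM hsame r C hC hr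
end
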